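/- Let X and Z be Γ-bornological spaces, with Z bounded (i.e., Z is a bounded subset of itself). If (Y_i)_{i∈I} is a trapping exhaustion of X, then (Z × Y_i)_{i∈I} is a trapping exhaustion of Z ⊗ X, where Z ⊗ X is the set Z × X with the bornology generated by products A × B of bounded subsets A of Z and B of X, and with the diagonal Γ-action. -/
import Mathlib


open Pointwise

/-- If Z is bounded and (Y_i) is a trapping exhaustion of X, then
(Z × Y_i) is a trapping exhaustion of Z ⊗ X. -/
theorem trapping_exhaustion_prod {Γ Z X : Type*} [Group Γ] [MulAction Γ Z]
    [MulAction Γ X] {I : Type*} [Preorder I]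
    (hI : ∀ i j : I, ∃ k, i ≤ k ∧ j ≤ k)
    (BZ : Set (Set Z)) (BX : Set (Set X))
    (hBZcover : ∀ z : Z, ∃ S ∈ BZ, z ∈ S)
    (hBZdown : ∀ S T : Set Z, S ∈ BZ → T ⊆ S → T ∈ BZ)
    (hBZunion : ∀ S T : Set Z, S ∈ BZ → T ∈ BZ → S ∪ T ∈ BZ)
    (hBZinv : ∀ (γ : Γ) (S : Set Z), S ∈ BZ → γ • S ∈ BZ)
    (hBXcover : ∀ x : X, ∃ S ∈ BX, x ∈ S)
    (hBXdown : ∀ S T : Set X, S ∈ BX → T ⊆ S → T ∈ BX)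
    (hBXunion : ∀ S T : Set X, S ∈ BX → T ∈ BX → S ∪ T ∈ BX)
    (hBXinv : ∀ (γ : Γ) (S : Set X), S ∈ BX → γ • S ∈ BX)
    (hZbounded : Set.univ ∈ BZ)
    (Y : I → Set X) (hYmono : Monotone Y)
    (hYinv : ∀ (i : I) (γ : Γ), γ • Y i = Y i)
    (htrap : ∀ F : Set X, (∀ γ : Γ, γ • F = F) →
      (∀ S ∈ BX, (F ∩ S).Finite) → ∃ i, F ⊆ Y i)
    (F : Set (Z × X)) (hFinv : ∀ γ : Γ, γ • F = F)
    (hFlf : ∀ A ∈ BZ, ∀ S ∈ BX, (F ∩ A ×ˢ S).Finite) :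
    ∃ i, F ⊆ Set.univ ×ˢ Y i := by
  set F' : Set X := Prod.snd '' F with hF'
  have hinv : ∀ γ : Γ, γ • F' = F' := by
    intro γ
    ext x
    constructor
    · rintro ⟨x, ⟨p, hp, rfl⟩, rfl⟩
      exact ⟨γ • p, by rw [← hFinv γ]; exact Set.smul_mem_smul_set hp, rfl⟩
    · rintro ⟨p, hp, rfl⟩
      refine ⟨(γ⁻¹ • p).2, ⟨γ⁻¹ • p, ?_, rfl⟩, ?_⟩
      · rw [← hFinv γ⁻¹]; exact Set.smul_mem_smul_set hp
      · simp [Prod.smul_def]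
  have hlf : ∀ S ∈ BX, (F' ∩ S).Finite := by
    intro S hS
    have : F' ∩ S ⊆ Prod.snd '' (F ∩ Set.univ ×ˢ S) := by
      rintro x ⟨⟨p, hp, rfl⟩, hx⟩
      exact ⟨p, ⟨hp, ⟨trivial, hx⟩⟩, rfl⟩
    exact ((hFlf _ hZbounded S hS).image _).subset this
  obtain ⟨i, hi⟩ := htrap F' hinv hlf
  exact ⟨i, fun p hp => ⟨trivial, hi ⟨p, hp, rfl⟩⟩⟩
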